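/- arXiv:1910.12222 — 2 statements merged into one kernel-verified Lean document; each statement's English description precedes it below -/
import Mathlib

section
/- Let A be a real n×p matrix, σ > 0, Ω a symmetric positive definite p×p real matrix, m ∈ ℝ^p. Set Γ := ((1/σ²)·AᵀA + Ω⁻¹)⁻¹ and, for y ∈ ℝ^n, μ(y) := Γ·((1/σ²)·Aᵀy + Ω⁻¹m). Then σ²·Id_n + AΩAᵀ is symmetric positive definite, and for all y ∈ ℝ^n and ψ ∈ ℝ^p the joint density factorizes as N(Aψ, σ²·Id_n)(y) · N(m, Ω)(ψ) = N(Am, σ²·Id_n + AΩAᵀ)(y) · N(μ(y), Γ)(ψ), where N(a, S)(x) := (2π)^(−d/2)·det(S)^(−1/2)·exp(−½·(x − a)ᵀS⁻¹(x − a)) denotes the d-dimensional Gaussian density with mean a and covariance S. -/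
open Matrix

/-- The `d`-dimensional Gaussian density with mean `a` and (symmetric positive definite)
covariance matrix `S`:
`N(a, S)(x) := (2π)^(−d/2) · det(S)^(−1/2) · exp(−½·(x − a)ᵀ S⁻¹ (x − a))`. -/
noncomputable def gaussDensity {d : ℕ} (a : Fin d → ℝ) (S : Matrix (Fin d) (Fin d) ℝ)
    (x : Fin d → ℝ) : ℝ :=
  (2 * Real.pi) ^ (-(d : ℝ) / 2) * S.det ^ (-(1 : ℝ) / 2) *
    Real.exp (-(1 / 2) * ((x - a) ⬝ᵥ S⁻¹.mulVec (x - a)))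

lemma dot_shift {k : ℕ} {S : Matrix (Fin k) (Fin k) ℝ} (hS : Sᵀ = S) (x z : Fin k → ℝ) :
    x ⬝ᵥ (S *ᵥ z) = (S *ᵥ x) ⬝ᵥ z := by
  rw [dotProduct_mulVec, ← mulVec_transpose, hS]

lemma dot_symm {k : ℕ} {S : Matrix (Fin k) (Fin k) ℝ} (hS : Sᵀ = S) (x z : Fin k → ℝ) :
    x ⬝ᵥ (S *ᵥ z) = z ⬝ᵥ (S *ᵥ x) := by
  rw [dot_shift hS, dotProduct_comm]

lemma dot_A {n p : ℕ} (A : Matrix (Fin n) (Fin p) ℝ) (x : Fin n → ℝ) (z : Fin p → ℝ) :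
    x ⬝ᵥ (A *ᵥ z) = (Aᵀ *ᵥ x) ⬝ᵥ z := by
  rw [dotProduct_mulVec, mulVec_transpose]

lemma dot_At {n p : ℕ} (A : Matrix (Fin n) (Fin p) ℝ) (x : Fin p → ℝ) (z : Fin n → ℝ) :
    x ⬝ᵥ (Aᵀ *ᵥ z) = (A *ᵥ x) ⬝ᵥ z := by
  rw [dotProduct_mulVec, vecMul_transpose]

lemma quad_expand {k : ℕ} {S : Matrix (Fin k) (Fin k) ℝ} (hS : Sᵀ = S) (a c : Fin k → ℝ) :
    (a - c) ⬝ᵥ (S *ᵥ (a - c))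
      = a ⬝ᵥ (S *ᵥ a) - 2 * (a ⬝ᵥ (S *ᵥ c)) + c ⬝ᵥ (S *ᵥ c) := by
  rw [mulVec_sub, dotProduct_sub, sub_dotProduct, sub_dotProduct, dot_symm hS c a]
  ring

lemma key_ident {p : ℕ} (C Λ Γ P : Matrix (Fin p) (Fin p) ℝ)
    (hP : P = C + Λ) (hΓP : Γ * P = 1) (hPΓ : P * Γ = 1) :
    C - C * Γ * C + Λ * Γ * Λ = Λ := by
  have k1 : C * Γ * C + Λ * Γ * C = C := by
    have : P * Γ * C = C := by rw [hPΓ, one_mul]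
    rw [hP, add_mul, add_mul] at this
    exact this
  have k3 : Λ * Γ * C + Λ * Γ * Λ = Λ := by
    have : Λ * Γ * P = Λ := by rw [mul_assoc, hΓP, mul_one]
    rw [hP, mul_add] at this
    exact this
  have h4 : C * Γ * C = C - Λ * Γ * C := eq_sub_of_add_eq k1
  rw [h4, sub_sub_cancel]
  exact k3

lemma quad_ident {n p : ℕ} (A : Matrix (Fin n) (Fin p) ℝ) (σ : ℝ)
    (Λ Γ P : Matrix (Fin p) (Fin p) ℝ)
    (hΛsym : Λᵀ = Λ) (hΓsym : Γᵀ = Γ)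
    (hP : P = (1 / σ ^ 2) • (Aᵀ * A) + Λ)
    (hΓP : Γ * P = 1) (hPΓ : P * Γ = 1)
    (m : Fin p → ℝ) (y : Fin n → ℝ) (ψ : Fin p → ℝ) :
    (y - A *ᵥ ψ) ⬝ᵥ (((1 / σ ^ 2) • (1 : Matrix (Fin n) (Fin n) ℝ)) *ᵥ (y - A *ᵥ ψ))
        + (ψ - m) ⬝ᵥ (Λ *ᵥ (ψ - m))
      = (y - A *ᵥ m) ⬝ᵥ
          (((1 / σ ^ 2) • (1 : Matrix (Fin n) (Fin n) ℝ)
              - ((1 / σ ^ 2) * (1 / σ ^ 2)) • (A * Γ * Aᵀ)) *ᵥ (y - A *ᵥ m))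
        + (ψ - Γ *ᵥ ((1 / σ ^ 2) • (Aᵀ *ᵥ y) + Λ *ᵥ m))
            ⬝ᵥ (P *ᵥ (ψ - Γ *ᵥ ((1 / σ ^ 2) • (Aᵀ *ᵥ y) + Λ *ᵥ m))) := by
  have hCsym : ((1 / σ ^ 2) • (Aᵀ * A))ᵀ = (1 / σ ^ 2) • (Aᵀ * A) := by
    rw [transpose_smul, transpose_mul, transpose_transpose]
  have hPsym : Pᵀ = P := by
    rw [hP, transpose_add, hCsym, hΛsym]
  set w := A *ᵥ ψ with hw
  set t := A *ᵥ m with ht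
  set u := Aᵀ *ᵥ y with hu
  set v := Aᵀ *ᵥ t with hv
  set l := Λ *ᵥ m with hl
  set b := (1 / σ ^ 2) • u + l with hb
  set q : ℝ := 1 / σ ^ 2 with hq
  -- elementary reductions
  have hCm : ((1 / σ ^ 2) • (Aᵀ * A)) *ᵥ m = q • v := by
    rw [smul_mulVec, ← mulVec_mulVec, ← ht, ← hv, hq]
  -- e1
  have e1 : (y - w) ⬝ᵥ ((q • (1 : Matrix (Fin n) (Fin n) ℝ)) *ᵥ (y - w))
      = q * (y ⬝ᵥ y) - 2 * (q * (y ⬝ᵥ w)) + q * (w ⬝ᵥ w) := by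
    rw [smul_mulVec, one_mulVec, dotProduct_smul, smul_eq_mul, dotProduct_sub,
      sub_dotProduct, sub_dotProduct, dotProduct_comm w y]
    ring
  -- e2
  have e2 : (ψ - m) ⬝ᵥ (Λ *ᵥ (ψ - m))
      = ψ ⬝ᵥ (Λ *ᵥ ψ) - 2 * (ψ ⬝ᵥ (Λ *ᵥ m)) + m ⬝ᵥ (Λ *ᵥ m) := quad_expand hΛsym ψ m
  -- e3
  have hAtyt : Aᵀ *ᵥ (y - t) = u - v := by rw [mulVec_sub]
  have e3 : (y - t) ⬝ᵥ ((q • (1 : Matrix (Fin n) (Fin n) ℝ) - (q * q) • (A * Γ * Aᵀ)) *ᵥ (y - t))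
      = (q * (y ⬝ᵥ y) - 2 * (q * (y ⬝ᵥ t)) + q * (t ⬝ᵥ t))
        - (q * q) * (u ⬝ᵥ (Γ *ᵥ u) - 2 * (u ⬝ᵥ (Γ *ᵥ v)) + v ⬝ᵥ (Γ *ᵥ v)) := by
    rw [sub_mulVec, smul_mulVec, one_mulVec, smul_mulVec, dotProduct_sub,
      dotProduct_smul, dotProduct_smul, smul_eq_mul, smul_eq_mul]
    rw [← mulVec_mulVec, ← mulVec_mulVec, dot_A, hAtyt, quad_expand hΓsym u v]
    have hyt : (y - t) ⬝ᵥ (y - t) = y ⬝ᵥ y - 2 * (y ⬝ᵥ t) + t ⬝ᵥ t := by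
      rw [dotProduct_sub, sub_dotProduct, sub_dotProduct, dotProduct_comm t y]; ring
    rw [hyt]
    ring
  -- e4
  have hPψ : ψ ⬝ᵥ (P *ᵥ ψ) = q * (w ⬝ᵥ w) + ψ ⬝ᵥ (Λ *ᵥ ψ) := by
    rw [hP, add_mulVec, dotProduct_add, smul_mulVec, ← mulVec_mulVec, ← hw,
      dotProduct_smul, smul_eq_mul, dot_At]
  have hPb : P *ᵥ (Γ *ᵥ b) = b := by rw [mulVec_mulVec, hPΓ, one_mulVec]
  have hψb : ψ ⬝ᵥ b = q * (y ⬝ᵥ w) + ψ ⬝ᵥ (Λ *ᵥ m) := by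
    rw [hb, dotProduct_add, dotProduct_smul, smul_eq_mul, hu, dot_At, dotProduct_comm, hl]
  have hbΓb : b ⬝ᵥ (Γ *ᵥ b)
      = (q * q) * (u ⬝ᵥ (Γ *ᵥ u)) + 2 * (q * (u ⬝ᵥ (Γ *ᵥ l))) + l ⬝ᵥ (Γ *ᵥ l) := by
    rw [hb, mulVec_add, mulVec_smul, dotProduct_add, add_dotProduct, add_dotProduct,
      dotProduct_smul, dotProduct_smul, smul_dotProduct, smul_dotProduct, dot_symm hΓsym l u]
    simp only [smul_eq_mul]
    ring
  have e4 : (ψ - Γ *ᵥ b) ⬝ᵥ (P *ᵥ (ψ - Γ *ᵥ b))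
      = (q * (w ⬝ᵥ w) + ψ ⬝ᵥ (Λ *ᵥ ψ)) - 2 * (q * (y ⬝ᵥ w) + ψ ⬝ᵥ (Λ *ᵥ m))
        + ((q * q) * (u ⬝ᵥ (Γ *ᵥ u)) + 2 * (q * (u ⬝ᵥ (Γ *ᵥ l))) + l ⬝ᵥ (Γ *ᵥ l)) := by
    rw [quad_expand hPsym ψ (Γ *ᵥ b), hPψ, hPb, hψb, dotProduct_comm (Γ *ᵥ b) b, hbΓb]
  -- relations
  have R1 : y ⬝ᵥ t = u ⬝ᵥ m := dot_A A y m
  have hCm' : (q • (Aᵀ * A)) *ᵥ m = q • v := hCm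
  have hΓPm : Γ *ᵥ ((q • (Aᵀ * A)) *ᵥ m) + Γ *ᵥ l = m := by
    rw [hl, mulVec_mulVec, mulVec_mulVec, ← add_mulVec, ← mul_add, ← hP, hΓP, one_mulVec]
  have R2 : q * (u ⬝ᵥ (Γ *ᵥ v)) + u ⬝ᵥ (Γ *ᵥ l) = u ⬝ᵥ m := by
    have h := congrArg (fun z => u ⬝ᵥ z) hΓPm
    simp only [dotProduct_add] at h
    rw [hCm', mulVec_smul, dotProduct_smul, smul_eq_mul] at h
    exact h
  have key := key_ident (q • (Aᵀ * A)) Λ Γ P hP hΓP hPΓ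
  have hkey := congrArg (fun X => m ⬝ᵥ (X *ᵥ m)) key
  simp only [sub_mulVec, add_mulVec, dotProduct_sub, dotProduct_add] at hkey
  have p1 : m ⬝ᵥ ((q • (Aᵀ * A)) *ᵥ m) = q * (t ⬝ᵥ t) := by
    rw [hCm', dotProduct_smul, smul_eq_mul, hv, dot_At]
  have p2 : m ⬝ᵥ ((q • (Aᵀ * A) * Γ * (q • (Aᵀ * A))) *ᵥ m) = (q * q) * (v ⬝ᵥ (Γ *ᵥ v)) := by
    rw [← mulVec_mulVec, ← mulVec_mulVec, hCm', dot_shift hCsym, hCm', mulVec_smul,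
      smul_dotProduct, dotProduct_smul, smul_eq_mul, smul_eq_mul]
    ring
  have p3 : m ⬝ᵥ ((Λ * Γ * Λ) *ᵥ m) = l ⬝ᵥ (Γ *ᵥ l) := by
    rw [← mulVec_mulVec, ← mulVec_mulVec, ← hl, dot_shift hΛsym, ← hl]
  rw [p1, p2, p3] at hkey
  linear_combination e1 + e2 - e3 - e4 + (2 * q) * R1 - (2 * q) * R2 - hkey

lemma woodbury {n p : ℕ} (A : Matrix (Fin n) (Fin p) ℝ) (σ : ℝ) (hσ : σ ≠ 0)
    (Ω Λ Γ P : Matrix (Fin p) (Fin p) ℝ)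
    (hΩΛ : Ω * Λ = 1)
    (hP : P = (1 / σ ^ 2) • (Aᵀ * A) + Λ) (hPΓ : P * Γ = 1) :
    (σ ^ 2 • (1 : Matrix (Fin n) (Fin n) ℝ) + A * Ω * Aᵀ) *
      ((1 / σ ^ 2) • (1 : Matrix (Fin n) (Fin n) ℝ)
        - ((1 / σ ^ 2) * (1 / σ ^ 2)) • (A * Γ * Aᵀ)) = 1 := by
  have hσ2 : σ ^ 2 ≠ 0 := pow_ne_zero 2 hσ
  have key0 : Ω * ((1 / σ ^ 2) • (Aᵀ * A)) * Γ = Ω - Γ := by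
    have h : Ω * (P * Γ) = Ω := by rw [hPΓ, mul_one]
    rw [← mul_assoc, hP, mul_add, add_mul, hΩΛ, one_mul] at h
    exact eq_sub_of_add_eq h
  have h1 : ((1 / σ ^ 2) * (1 / σ ^ 2)) • (A * Ω * Aᵀ * (A * Γ * Aᵀ))
      = (1 / σ ^ 2) • (A * (Ω * ((1 / σ ^ 2) • (Aᵀ * A)) * Γ) * Aᵀ) := by
    simp only [mul_smul_comm, smul_mul_assoc, Matrix.smul_mul, Matrix.mul_smul, smul_smul, Matrix.mul_assoc]
  rw [add_mul, mul_sub, mul_sub]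
  simp only [smul_mul_assoc, mul_smul_comm, Matrix.smul_mul, Matrix.mul_smul, one_mul, mul_one, smul_smul]
  rw [h1, key0, Matrix.mul_sub, Matrix.sub_mul, smul_sub]
  rw [show 1 / σ ^ 2 * σ ^ 2 = (1 : ℝ) by field_simp,
    show 1 / σ ^ 2 * (1 / σ ^ 2) * σ ^ 2 = 1 / σ ^ 2 by field_simp, one_smul]
  abel

lemma det_fact {n p : ℕ} (A : Matrix (Fin n) (Fin p) ℝ) (σ : ℝ) (hσ : σ ≠ 0)
    (Ω Λ P : Matrix (Fin p) (Fin p) ℝ) (hΩΛ : Ω * Λ = 1)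
    (hP : P = (1 / σ ^ 2) • (Aᵀ * A) + Λ) :
    (σ ^ 2 • (1 : Matrix (Fin n) (Fin n) ℝ) + A * Ω * Aᵀ).det
      = (σ ^ 2) ^ n * (Ω.det * P.det) := by
  have step1 : σ ^ 2 • (1 : Matrix (Fin n) (Fin n) ℝ) + A * Ω * Aᵀ
      = σ ^ 2 • ((1 : Matrix (Fin n) (Fin n) ℝ) + A * ((1 / σ ^ 2) • (Ω * Aᵀ))) := by
    rw [smul_add]
    congr 1
    rw [Matrix.mul_smul, smul_smul, show σ ^ 2 * (1 / σ ^ 2) = (1 : ℝ) by field_simp,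
      one_smul, Matrix.mul_assoc]
  rw [step1, det_smul, det_one_add_mul_comm]
  have step2 : (1 : Matrix (Fin p) (Fin p) ℝ) + ((1 / σ ^ 2) • (Ω * Aᵀ)) * A = Ω * P := by
    rw [hP, mul_add, hΩΛ, Matrix.mul_smul, Matrix.smul_mul, Matrix.mul_assoc, add_comm]
  rw [step2, det_mul, Fintype.card_fin]

lemma posDef_smul' {k : ℕ} {M : Matrix (Fin k) (Fin k) ℝ} (hM : M.PosDef) {c : ℝ}
    (hc : 0 < c) : (c • M).PosDef := by
  refine ⟨?_, fun x hx => ?_⟩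
  · show (c • M)ᴴ = c • M
    rw [conjTranspose_smul, star_trivial, hM.1.eq]
  · exact (hM.smul hc).2 hx

lemma posSemidef_smul' {k : ℕ} {M : Matrix (Fin k) (Fin k) ℝ} (hM : M.PosSemidef) {c : ℝ}
    (hc : 0 ≤ c) : (c • M).PosSemidef := by
  refine ⟨?_, fun x => ?_⟩
  · show (c • M)ᴴ = c • M
    rw [conjTranspose_smul, star_trivial, hM.1.eq]
  · exact (hM.smul hc).2 x

lemma prod_helper (c1 c2 d1 d2 d3 d4 e1 e2 e3 e4 : ℝ) (hd : d1 * d2 = d3 * d4)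
    (he : e1 + e2 = e3 + e4) :
    c1 * d1 * Real.exp e1 * (c2 * d2 * Real.exp e2)
      = c1 * d3 * Real.exp e3 * (c2 * d4 * Real.exp e4) := by
  rw [show c1 * d1 * Real.exp e1 * (c2 * d2 * Real.exp e2)
      = c1 * c2 * ((d1 * d2) * (Real.exp e1 * Real.exp e2)) by ring,
    ← Real.exp_add, hd, he, Real.exp_add]
  ring

/-- `σ²·Id + AΩAᵀ` is symmetric positive definite and the joint Gaussian
density factorizes:
`N(Aψ, σ²·Id)(y) · N(m, Ω)(ψ) = N(Am, σ²·Id + AΩAᵀ)(y) · N(μ(y), Γ)(ψ)`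
where `Γ := ((1/σ²)·AᵀA + Ω⁻¹)⁻¹` and `μ(y) := Γ·((1/σ²)·Aᵀy + Ω⁻¹m)`. -/
theorem stmt4 {n p : ℕ} (A : Matrix (Fin n) (Fin p) ℝ) (σ : ℝ) (hσ : 0 < σ)
    (Ω : Matrix (Fin p) (Fin p) ℝ) (hΩ : Ω.PosDef) (m : Fin p → ℝ)
    (Γ : Matrix (Fin p) (Fin p) ℝ)
    (hΓ : Γ = ((1 / σ ^ 2) • (Aᵀ * A) + Ω⁻¹)⁻¹)
    (μ : (Fin n → ℝ) → (Fin p → ℝ))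
    (hμ : ∀ y, μ y = Γ.mulVec ((1 / σ ^ 2) • Aᵀ.mulVec y + Ω⁻¹.mulVec m)) :
    (σ ^ 2 • (1 : Matrix (Fin n) (Fin n) ℝ) + A * Ω * Aᵀ).PosDef ∧
      ∀ (y : Fin n → ℝ) (ψ : Fin p → ℝ),
        gaussDensity (A.mulVec ψ) (σ ^ 2 • 1) y * gaussDensity m Ω ψ
          = gaussDensity (A.mulVec m) (σ ^ 2 • 1 + A * Ω * Aᵀ) y
              * gaussDensity (μ y) Γ ψ := by
  have hσ2 : (0 : ℝ) < σ ^ 2 := by positivity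
  have hσ2' : (0 : ℝ) ≤ 1 / σ ^ 2 := by positivity
  have hΛpd : (Ω⁻¹).PosDef := hΩ.inv
  have hΛsym : (Ω⁻¹)ᵀ = Ω⁻¹ := by
    have := hΛpd.1
    rwa [IsHermitian, conjTranspose_eq_transpose_of_trivial] at this
  have htApsd : (Aᵀ * A).PosSemidef := by
    have := Matrix.posSemidef_conjTranspose_mul_self A
    rwa [conjTranspose_eq_transpose_of_trivial] at this
  have hCpsd : ((1 / σ ^ 2) • (Aᵀ * A)).PosSemidef := posSemidef_smul' htApsd hσ2'
  set P : Matrix (Fin p) (Fin p) ℝ := (1 / σ ^ 2) • (Aᵀ * A) + Ω⁻¹ with hPdef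
  have hPpd : P.PosDef := Matrix.PosDef.posSemidef_add hCpsd hΛpd
  have hPdet : IsUnit P.det := isUnit_iff_ne_zero.mpr hPpd.det_pos.ne'
  have hPΓ : P * Γ = 1 := by rw [hΓ]; exact mul_nonsing_inv _ hPdet
  have hΓP : Γ * P = 1 := by rw [hΓ]; exact nonsing_inv_mul _ hPdet
  have hΓinv : Γ⁻¹ = P := by rw [hΓ]; exact nonsing_inv_nonsing_inv _ hPdet
  have hΓpd : Γ.PosDef := hΓ ▸ hPpd.inv
  have hΓsym : Γᵀ = Γ := by
    have := hΓpd.1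
    rwa [IsHermitian, conjTranspose_eq_transpose_of_trivial] at this
  have hΩdet : IsUnit Ω.det := isUnit_iff_ne_zero.mpr hΩ.det_pos.ne'
  have hΩΛ : Ω * Ω⁻¹ = 1 := mul_nonsing_inv _ hΩdet
  have hAΩA : (A * Ω * Aᵀ).PosSemidef := by
    have := hΩ.posSemidef.mul_mul_conjTranspose_same A
    rwa [conjTranspose_eq_transpose_of_trivial] at this
  have hS1pd : (σ ^ 2 • (1 : Matrix (Fin n) (Fin n) ℝ)).PosDef :=
    posDef_smul' Matrix.PosDef.one hσ2
  have hMpd : (σ ^ 2 • (1 : Matrix (Fin n) (Fin n) ℝ) + A * Ω * Aᵀ).PosDef :=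
    hS1pd.add_posSemidef hAΩA
  refine ⟨hMpd, fun y ψ => ?_⟩
  have hinv1 : (σ ^ 2 • (1 : Matrix (Fin n) (Fin n) ℝ))⁻¹
      = (1 / σ ^ 2) • (1 : Matrix (Fin n) (Fin n) ℝ) := by
    apply inv_eq_right_inv
    rw [smul_mul_assoc, one_mul, smul_smul, show σ ^ 2 * (1 / σ ^ 2) = (1 : ℝ) by field_simp,
      one_smul]
  have hMinv : (σ ^ 2 • (1 : Matrix (Fin n) (Fin n) ℝ) + A * Ω * Aᵀ)⁻¹
      = (1 / σ ^ 2) • (1 : Matrix (Fin n) (Fin n) ℝ)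
        - ((1 / σ ^ 2) * (1 / σ ^ 2)) • (A * Γ * Aᵀ) :=
    inv_eq_right_inv (woodbury A σ hσ.ne' Ω Ω⁻¹ Γ P hΩΛ hPdef hPΓ)
  have hdetΓ : Γ.det = P.det⁻¹ := by rw [hΓ, det_nonsing_inv, Ring.inverse_eq_inv']
  have hdetEq : (σ ^ 2 • (1 : Matrix (Fin n) (Fin n) ℝ)).det * Ω.det
      = (σ ^ 2 • (1 : Matrix (Fin n) (Fin n) ℝ) + A * Ω * Aᵀ).det * Γ.det := by
    rw [det_fact A σ hσ.ne' Ω Ω⁻¹ P hΩΛ hPdef, hdetΓ, det_smul, det_one, mul_one,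
      Fintype.card_fin]
    field_simp [hPpd.det_pos.ne']
  have hdd : (σ ^ 2 • (1 : Matrix (Fin n) (Fin n) ℝ)).det ^ (-(1 : ℝ) / 2)
        * Ω.det ^ (-(1 : ℝ) / 2)
      = (σ ^ 2 • (1 : Matrix (Fin n) (Fin n) ℝ) + A * Ω * Aᵀ).det ^ (-(1 : ℝ) / 2)
        * Γ.det ^ (-(1 : ℝ) / 2) := by
    rw [← Real.mul_rpow hS1pd.det_pos.le hΩ.det_pos.le,
      ← Real.mul_rpow hMpd.det_pos.le hΓpd.det_pos.le, hdetEq]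
  have hquad := quad_ident A σ Ω⁻¹ Γ P hΛsym hΓsym hPdef hΓP hPΓ m y ψ
  simp only [gaussDensity]
  rw [hinv1, hMinv, hΓinv, hμ y]
  exact prod_helper _ _ _ _ _ _ _ _ _ _ hdd (by linarith [hquad])
end

section
/- Let J be a real n×p matrix, σ > 0, Ω a symmetric positive definite p×p real matrix, m ∈ ℝ^p, y, f̂ ∈ ℝ^n, and ψ̂ ∈ ℝ^p. Assume the stationarity condition (1/σ²)·Jᵀ(y − f̂) = Ω⁻¹(ψ̂ − m). Define z := y − f̂ + Jψ̂ and Γ := ((1/σ²)·JᵀJ + Ω⁻¹)⁻¹. Then Γ·((1/σ²)·Jᵀz + Ω⁻¹m) = ψ̂; that is, the conditional mean (and mode) of ψ given z in the linearized model z = Jψ + ε, ψ ~ N(m, Ω), ε ~ N(0, σ²·Id_n), equals ψ̂. -/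
open Matrix

/-- under the stationarity condition `(1/σ²)·Jᵀ(y − f̂) = Ω⁻¹(ψ̂ − m)`, the
conditional mean `Γ·((1/σ²)·Jᵀz + Ω⁻¹m)` of `ψ` given `z := y − f̂ + Jψ̂` in the linearized
model (with `Γ := ((1/σ²)·JᵀJ + Ω⁻¹)⁻¹`) equals `ψ̂`. -/
theorem stmt11 {n p : ℕ} (J : Matrix (Fin n) (Fin p) ℝ) (σ : ℝ) (hσ : 0 < σ)
    (Ω : Matrix (Fin p) (Fin p) ℝ) (hΩ : Ω.PosDef) (m : Fin p → ℝ)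
    (y fhat : Fin n → ℝ) (ψhat : Fin p → ℝ)
    (hstat : (1 / σ ^ 2) • Jᵀ.mulVec (y - fhat) = Ω⁻¹.mulVec (ψhat - m))
    (z : Fin n → ℝ) (hz : z = y - fhat + J.mulVec ψhat)
    (Γ : Matrix (Fin p) (Fin p) ℝ)
    (hΓ : Γ = ((1 / σ ^ 2) • (Jᵀ * J) + Ω⁻¹)⁻¹) :
    Γ.mulVec ((1 / σ ^ 2) • Jᵀ.mulVec z + Ω⁻¹.mulVec m) = ψhat := by
  set A := (1 / σ ^ 2) • (Jᵀ * J) + Ω⁻¹ with hA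
  have hσ2 : (0:ℝ) < 1 / σ ^ 2 := by positivity
  have hps : ((1 / σ ^ 2) • (Jᵀ * J)).PosSemidef := by
    have h := Matrix.posSemidef_conjTranspose_mul_self ((1 / σ) • J)
    have : ((1 / σ) • J)ᴴ * ((1 / σ) • J) = (1 / σ ^ 2) • (Jᵀ * J) := by
      simp [Matrix.conjTranspose_smul, Matrix.smul_mul, Matrix.mul_smul, smul_smul,
        div_mul_div_comm, sq]
    rwa [this] at h
  have hApd : A.PosDef := Matrix.PosDef.posSemidef_add hps hΩ.inv
  have hdet : IsUnit A.det := isUnit_iff_ne_zero.mpr (ne_of_gt hApd.det_pos)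
  have key : (1 / σ ^ 2) • Jᵀ.mulVec z + Ω⁻¹.mulVec m = A.mulVec ψhat := by
    subst hz
    rw [Matrix.mulVec_add, smul_add, hstat, hA, Matrix.add_mulVec, Matrix.mulVec_sub,
      Matrix.smul_mulVec, Matrix.mulVec_mulVec]
    abel
  rw [key, hΓ, Matrix.mulVec_mulVec, Matrix.nonsing_inv_mul A hdet, Matrix.one_mulVec]
end
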